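/- arXiv:2310.13658 — 2 statements merged into one kernel-verified Lean document; each statement's English description precedes it below -/
import Mathlib

section
/- For every integer n ≥ 3, the number of partitions of n with no parts equal to 1 and whose largest part occurs more than once equals -∑_{k=4}^{n+5} S^{(4)}_{n+5,k} · μ(k); equivalently, p(n) - 2p(n-1) + p(n-2) = -∑_{k=4}^{n+5} S^{(4)}_{n+5,k} · μ(k). -/
open Finset

/-- The number of partitions of `n`. -/
def p (n : ℕ) : ℕ := Fintype.card (Nat.Partition n)

/-- The partition function extended by zero to negative integer arguments. -/
def pz (m : ℤ) : ℤ := if 0 ≤ m then (p m.toNat : ℤ) else 0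

/-- `S r n k` : the total number of parts equal to `k` in all partitions of `n`
whose parts are all at least `r`. -/
def S (r n k : ℕ) : ℕ :=
  ∑ P : Nat.Partition n, if ∀ i ∈ P.parts, r ≤ i then P.parts.count k else 0

/-!
Let `pAtLeast r n` count the partitions of `n` into parts `≥ r`. Removing one part `k` from a
partition gives `S r (n + k) k = pAtLeast r n + S r n k`, hence
`S r N k = ∑_{m ≤ N, k ∣ m} pAtLeast r (N - m)`. Exchanging the sums turns the Möbius sum into
`∑_m pAtLeast 4 (N - m) · ∑_{k ∣ m, k ≥ 4} μ k`. As `∑_{k ∣ m} μ k = 0` for `m > 1`, the inner sum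
only sees the divisors `1, 2, 3`, so it is periodic mod 6 for `m ≥ 4`; its generating function is
`-x⁵(1 - x + x²)/(1 - x⁶)`. Multiplied by `∑ pAtLeast 4 n xⁿ = (1 - x)(1 - x²)(1 - x³) ∑ p n xⁿ`
this collapses to `-x⁵(1 - x)² ∑ p n xⁿ`.

On the other side, partitions of `n` without 1s are counted by `p n - p (n - 1)`, and raising the
largest part by one maps the partitions of `n - 1` without 1s bijectively onto the partitions of `n`
without 1s whose largest part is not repeated.
-/

theorem Nat.card_subtype_and_add_card_subtype_and_not {α : Type*} [Finite α] (p q : α → Prop) :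
    Nat.card {x // p x ∧ q x} + Nat.card {x // p x ∧ ¬ q x} = Nat.card {x // p x} := by
  classical
  rw [← Nat.card_sum]
  exact Nat.card_congr <|
    ((Equiv.subtypeSubtypeEquivSubtypeInter p q).symm.sumCongr
      (Equiv.subtypeSubtypeEquivSubtypeInter p (¬ q ·)).symm).trans (Equiv.sumCompl _)

theorem Finset.filter_dvd_Icc_add_self {k : ℕ} (hk : 0 < k) (n : ℕ) :
    {m ∈ Icc 1 (n + k) | k ∣ m} =
      insert k ({m ∈ Icc 1 n | k ∣ m}.map (addRightEmbedding k)) := by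
  ext m
  simp only [mem_filter, mem_Icc, mem_insert, mem_map, addRightEmbedding_apply]
  constructor
  · rintro ⟨⟨h1, hm⟩, hkm⟩
    rcases eq_or_ne m k with rfl | hne
    · exact Or.inl rfl
    · have hlt : k < m := lt_of_le_of_ne (Nat.le_of_dvd h1 hkm) hne.symm
      exact Or.inr ⟨m - k, ⟨by omega, Nat.dvd_sub_self_right.2 (Or.inl hkm)⟩, by omega⟩
  · rintro (rfl | ⟨a, ⟨ha, hka⟩, rfl⟩)
    · exact ⟨⟨hk, by omega⟩, dvd_rfl⟩
    · exact ⟨by omega, Nat.dvd_add_self_right.2 hka⟩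

namespace Multiset

variable {α : Type*} [LinearOrder α] [OrderBot α] {s : Multiset α} {a b : α}

theorem sup_mem_of_ne_zero (hs : s ≠ 0) : s.sup ∈ s := by
  classical
  obtain ⟨i, hi, h⟩ := Finset.exists_mem_eq_sup s.toFinset (by simpa using hs) id
  rw [Finset.sup_def, toFinset_val, map_id, sup_dedup] at h
  simpa [h] using hi

theorem sup_cons_of_forall_le (h : ∀ x ∈ s, x ≤ a) : (a ::ₘ s).sup = a := by
  rw [sup_cons, sup_eq_left.2 (sup_le.2 h)]

variable [DecidableEq α]

theorem exists_max_two_le_count_iff :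
    (∃ m ∈ s, (∀ i ∈ s, i ≤ m) ∧ 2 ≤ s.count m) ↔ 2 ≤ s.count s.sup := by
  constructor
  · rintro ⟨m, hm, hmax, hcount⟩
    rwa [le_antisymm (le_sup hm) (sup_le.2 hmax)] at hcount
  · intro h
    exact ⟨s.sup, count_pos.1 (by omega), fun i hi => le_sup hi, h⟩

theorem lt_sup_of_mem_erase_sup (h : s.count s.sup < 2) {x : α} (hx : x ∈ s.erase s.sup) :
    x < s.sup := by
  refine lt_of_le_of_ne (le_sup (mem_of_mem_erase hx)) fun hxs => ?_
  have := count_pos.2 hx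
  rw [hxs, count_erase_self] at this
  omega

def replaceMax (s : Multiset α) (a : α) : Multiset α := a ::ₘ s.erase s.sup

theorem mem_replaceMax {x : α} : x ∈ s.replaceMax a ↔ x = a ∨ x ∈ s.erase s.sup :=
  mem_cons

theorem replaceMax_sup (hs : s ≠ 0) : s.replaceMax s.sup = s :=
  cons_erase (sup_mem_of_ne_zero hs)

theorem sup_replaceMax (h : ∀ x ∈ s.erase s.sup, x ≤ a) : (s.replaceMax a).sup = a :=
  sup_cons_of_forall_le h

theorem replaceMax_replaceMax (h : ∀ x ∈ s.erase s.sup, x ≤ a) :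
    (s.replaceMax a).replaceMax b = s.replaceMax b := by
  rw [replaceMax, sup_replaceMax h, replaceMax, erase_cons_head]
  rfl

theorem count_sup_replaceMax (h : ∀ x ∈ s.erase s.sup, x < a) :
    (s.replaceMax a).count (s.replaceMax a).sup = 1 := by
  rw [sup_replaceMax fun x hx => (h x hx).le, replaceMax, count_cons_self,
    count_eq_zero.2 fun ha => (h a ha).false]

end Multiset

theorem Multiset.sum_replaceMax {s : Multiset ℕ} (hs : s ≠ 0) (a : ℕ) :
    (s.replaceMax a).sum + s.sup = s.sum + a := by
  rw [← sum_erase (sup_mem_of_ne_zero hs), replaceMax, sum_cons]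
  ring

namespace Nat.Partition

open Multiset

theorem one_notMem_parts_iff {n : ℕ} (P : n.Partition) : 1 ∉ P.parts ↔ ∀ i ∈ P.parts, 2 ≤ i :=
  ⟨fun h i hi => Nat.lt_of_le_of_ne (P.parts_pos hi) (by rintro rfl; exact h hi),
    fun h h1 => absurd (h 1 h1) (by norm_num)⟩

theorem parts_ne_zero {n : ℕ} (P : n.Partition) (hn : n ≠ 0) : P.parts ≠ 0 := by
  rintro h
  simp [← P.parts_sum, h] at hn

def consPartEquiv {r n k : ℕ} (hk : 0 < k) (hrk : r ≤ k) :
    {P : n.Partition // ∀ i ∈ P.parts, r ≤ i} ≃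
      {P : (n + k).Partition // (∀ i ∈ P.parts, r ≤ i) ∧ k ∈ P.parts} where
  toFun P := ⟨⟨k ::ₘ P.1.parts,
      by simpa [hk] using fun _ => P.1.parts_pos,
      by rw [Multiset.sum_cons, P.1.parts_sum, add_comm]⟩,
    by simpa [hrk] using P.2⟩
  invFun P := ⟨⟨P.1.parts.erase k,
      fun hi => P.1.parts_pos (mem_of_mem_erase hi),
      by have := sum_erase P.2.2; rw [P.1.parts_sum] at this; omega⟩,
    fun i hi => P.2.1 i (mem_of_mem_erase hi)⟩
  left_inv P := by ext1; ext1; simp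
  right_inv P := by ext1; ext1; simp [cons_erase P.2.2]

theorem lt_sup_parts_of_count_sup_lt_two {r n : ℕ} (hrn : r ≤ n) (P : (n + 1).Partition)
    (hr : ∀ i ∈ P.parts, r ≤ i) (hcount : P.parts.count P.parts.sup < 2) :
    r < P.parts.sup := by
  by_contra! hsup
  -- all parts but one copy of the largest lie in `[r, sup)`, which is empty
  have herase : P.parts.erase P.parts.sup = 0 := eq_zero_of_forall_notMem fun x hx =>
    (hr x (mem_of_mem_erase hx)).not_gt ((lt_sup_of_mem_erase_sup hcount hx).trans_le hsup)
  have hsum := P.parts.sum_replaceMax (P.parts_ne_zero n.succ_ne_zero) 0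
  rw [replaceMax, herase, P.parts_sum] at hsum
  simp at hsum
  omega

def raiseMaxEquiv {r n : ℕ} (hr : 0 < r) (hrn : r ≤ n) :
    {P : n.Partition // ∀ i ∈ P.parts, r ≤ i} ≃
      {P : (n + 1).Partition // (∀ i ∈ P.parts, r ≤ i) ∧ P.parts.count P.parts.sup < 2} where
  toFun Q :=
    have hQ : Q.1.parts ≠ 0 := Q.1.parts_ne_zero (hr.trans_le hrn).ne'
    have hlt : ∀ x ∈ Q.1.parts.erase Q.1.parts.sup, x < Q.1.parts.sup + 1 :=
      fun x hx => Nat.lt_succ_of_le (le_sup (mem_of_mem_erase hx))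
    ⟨⟨Q.1.parts.replaceMax (Q.1.parts.sup + 1),
      fun hi => by
        rcases mem_replaceMax.1 hi with rfl | hi
        · exact Nat.succ_pos _
        · exact Q.1.parts_pos (mem_of_mem_erase hi),
      by
        have := Q.1.parts.sum_replaceMax hQ (Q.1.parts.sup + 1)
        rw [Q.1.parts_sum] at this
        omega⟩,
    fun i hi => by
      rcases mem_replaceMax.1 hi with rfl | hi
      · exact (Q.2 _ (sup_mem_of_ne_zero hQ)).trans (Nat.le_succ _)
      · exact Q.2 i (mem_of_mem_erase hi),
    by simp [count_sup_replaceMax hlt]⟩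
  invFun P :=
    have hP : P.1.parts ≠ 0 := P.1.parts_ne_zero n.succ_ne_zero
    have hlt := P.1.lt_sup_parts_of_count_sup_lt_two hrn P.2.1 P.2.2
    ⟨⟨P.1.parts.replaceMax (P.1.parts.sup - 1),
      fun hi => by
        rcases mem_replaceMax.1 hi with rfl | hi
        · omega
        · exact P.1.parts_pos (mem_of_mem_erase hi),
      by
        have := P.1.parts.sum_replaceMax hP (P.1.parts.sup - 1)
        rw [P.1.parts_sum] at this
        omega⟩,
    fun i hi => by
      rcases mem_replaceMax.1 hi with rfl | hi
      · omega
      · exact P.2.1 i (mem_of_mem_erase hi)⟩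
  left_inv Q := by
    have hQ : Q.1.parts ≠ 0 := Q.1.parts_ne_zero (hr.trans_le hrn).ne'
    have hle : ∀ x ∈ Q.1.parts.erase Q.1.parts.sup, x ≤ Q.1.parts.sup + 1 :=
      fun x hx => (le_sup (mem_of_mem_erase hx)).trans (Nat.le_succ _)
    ext1; ext1
    simp only [sup_replaceMax hle, Nat.add_sub_cancel, replaceMax_replaceMax hle,
      replaceMax_sup hQ]
  right_inv P := by
    have hP : P.1.parts ≠ 0 := P.1.parts_ne_zero n.succ_ne_zero
    have hlt := P.1.lt_sup_parts_of_count_sup_lt_two hrn P.2.1 P.2.2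
    have hle : ∀ x ∈ P.1.parts.erase P.1.parts.sup, x ≤ P.1.parts.sup - 1 :=
      fun x hx => Nat.le_sub_one_of_lt (lt_sup_of_mem_erase_sup P.2.2 hx)
    ext1; ext1
    simp only [sup_replaceMax hle, Nat.sub_add_cancel (hr.trans hlt), replaceMax_replaceMax hle,
      replaceMax_sup hP]

end Nat.Partition

noncomputable def pAtLeast (r n : ℕ) : ℕ := Nat.card {P : n.Partition // ∀ i ∈ P.parts, r ≤ i}

theorem pAtLeast_one (n : ℕ) : pAtLeast 1 n = p n := by
  rw [pAtLeast, p, ← Nat.card_eq_fintype_card]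
  exact Nat.card_congr (Equiv.subtypeUnivEquiv fun P i hi => P.parts_pos hi)

theorem pAtLeast_eq_succ_add {r : ℕ} (hr : 0 < r) (n : ℕ) :
    pAtLeast r n = pAtLeast (r + 1) n + if r ≤ n then pAtLeast r (n - r) else 0 := by
  have hsucc : Nat.card {P : n.Partition // (∀ i ∈ P.parts, r ≤ i) ∧ r ∉ P.parts} =
      pAtLeast (r + 1) n :=
    Nat.card_congr <| Equiv.subtypeEquivRight fun P =>
      ⟨fun h i hi => lt_of_le_of_ne (h.1 i hi) (fun e => h.2 (e ▸ hi)),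
        fun h => ⟨fun i hi => Nat.le_of_succ_le (h i hi),
          fun hr => Nat.not_succ_le_self r (h r hr)⟩⟩
  rw [pAtLeast, ← Nat.card_subtype_and_add_card_subtype_and_not _ (r ∈ ·.parts), hsucc,
    add_comm]
  congr 1
  split_ifs with hrn
  · obtain ⟨m, rfl⟩ := Nat.exists_eq_add_of_le' hrn
    rw [Nat.add_sub_cancel, pAtLeast]
    exact (Nat.card_congr (Nat.Partition.consPartEquiv hr le_rfl)).symm
  · exact Nat.card_eq_zero.2 (Or.inl ⟨fun P => hrn (Nat.Partition.le_of_mem_parts P.2.2)⟩)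

theorem pAtLeast_two_add_p_pred {n : ℕ} (hn : 0 < n) : pAtLeast 2 n + p (n - 1) = p n := by
  rw [← pAtLeast_one, ← pAtLeast_one, pAtLeast_eq_succ_add one_pos n, if_pos (show 1 ≤ n from hn)]

theorem card_two_le_count_sup_add_pAtLeast {r n : ℕ} (hr : 0 < r) (hrn : r ≤ n) :
    Nat.card {P : (n + 1).Partition //
        (∀ i ∈ P.parts, r ≤ i) ∧ 2 ≤ P.parts.count P.parts.sup} + pAtLeast r n =
      pAtLeast r (n + 1) := by
  rw [pAtLeast, pAtLeast, ← Nat.card_subtype_and_add_card_subtype_and_not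
    (fun P : (n + 1).Partition => ∀ i ∈ P.parts, r ≤ i)
    (fun P => 2 ≤ P.parts.count P.parts.sup)]
  congr 1
  exact Nat.card_congr <| (Nat.Partition.raiseMaxEquiv hr hrn).trans <|
    Equiv.subtypeEquivRight fun _ => by rw [not_le]

theorem card_no_one_max_repeated {n : ℕ} (hn : 3 ≤ n) :
    (Nat.card {P : n.Partition //
        1 ∉ P.parts ∧ ∃ m ∈ P.parts, (∀ i ∈ P.parts, i ≤ m) ∧ 2 ≤ P.parts.count m} : ℤ) =
      (p n : ℤ) - 2 * (p (n - 1) : ℤ) + (p (n - 2) : ℤ) := by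
  obtain ⟨m, rfl⟩ := Nat.exists_eq_add_of_le' (by omega : 1 ≤ n)
  have hcard := card_two_le_count_sup_add_pAtLeast two_pos (by omega : 2 ≤ m)
  have hm1 := pAtLeast_two_add_p_pred (n := m + 1) (by omega)
  have hm := pAtLeast_two_add_p_pred (n := m) (by omega)
  rw [Nat.card_congr (Equiv.subtypeEquivRight fun P => by
    rw [P.one_notMem_parts_iff, Multiset.exists_max_two_le_count_iff])]
  rw [show m + 1 - 2 = m - 1 by omega, Nat.add_sub_cancel] at *
  omega

theorem S_eq_sum_subtype (r n k : ℕ) :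
    S r n k = ∑ P : {P : n.Partition // ∀ i ∈ P.parts, r ≤ i}, P.1.parts.count k := by
  rw [S, ← Finset.sum_filter]
  exact Finset.sum_subtype _ (by simp) _

theorem S_eq_sum_subtype_mem (r n k : ℕ) :
    S r n k = ∑ P : {P : n.Partition // (∀ i ∈ P.parts, r ≤ i) ∧ k ∈ P.parts},
      P.1.parts.count k := by
  rw [S, ← Finset.sum_filter, ← Finset.sum_filter_of_ne (p := (k ∈ ·.parts))
    (f := fun P : n.Partition => P.parts.count k) (fun P _ h => Multiset.count_ne_zero.1 h),
    Finset.filter_filter]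
  exact Finset.sum_subtype _ (by simp) _

theorem S_add_self {r k : ℕ} (hk : 0 < k) (hrk : r ≤ k) (n : ℕ) :
    S r (n + k) k = pAtLeast r n + S r n k := by
  rw [S_eq_sum_subtype_mem, S_eq_sum_subtype, pAtLeast, Nat.card_eq_fintype_card,
    Fintype.card_eq_sum_ones, ← Finset.sum_add_distrib]
  exact (Fintype.sum_equiv (Nat.Partition.consPartEquiv hk hrk) _ _
    (fun P => by simp [Nat.Partition.consPartEquiv, add_comm])).symm

theorem S_eq_zero_of_lt {r n k : ℕ} (h : n < k) : S r n k = 0 :=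
  Finset.sum_eq_zero fun P _ => by
    simp [Multiset.count_eq_zero.2 fun hk => h.not_ge (Nat.Partition.le_of_mem_parts hk)]

theorem S_eq_sum_dvd {r k : ℕ} (hk : 0 < k) (hrk : r ≤ k) (n : ℕ) :
    S r n k = ∑ m ∈ Icc 1 n with k ∣ m, pAtLeast r (n - m) := by
  induction n using Nat.strong_induction_on with
  | _ n ih =>
    rcases lt_or_ge n k with hnk | hkn
    · rw [S_eq_zero_of_lt hnk, eq_comm]
      exact Finset.sum_eq_zero fun m hm => by
        simp only [mem_filter, mem_Icc] at hm
        exact absurd (Nat.le_of_dvd hm.1.1 hm.2) (by omega)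
    obtain ⟨n, rfl⟩ := Nat.exists_eq_add_of_le' hkn
    rw [S_add_self hk hrk, ih n (by omega), Finset.filter_dvd_Icc_add_self hk,
      Finset.sum_insert (by simp), Finset.sum_map, Nat.add_sub_cancel]
    congr 1
    exact Finset.sum_congr rfl fun m _ => by simp [Nat.add_sub_add_right]

open ArithmeticFunction
open scoped ArithmeticFunction.Moebius

theorem sum_S_mul_moebius {r : ℕ} (hr : 0 < r) (N : ℕ) :
    ∑ k ∈ Icc r N, (S r N k : ℤ) * μ k =
      ∑ m ∈ Icc 1 N, (pAtLeast r (N - m) : ℤ) * ∑ k ∈ m.divisors with r ≤ k, μ k := by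
  have hS : ∀ k ∈ Icc r N, (S r N k : ℤ) * μ k =
      ∑ m ∈ Icc 1 N with k ∣ m, (pAtLeast r (N - m) : ℤ) * μ k := fun k hk => by
    rw [S_eq_sum_dvd (hr.trans_le (mem_Icc.1 hk).1) (mem_Icc.1 hk).1, Nat.cast_sum,
      Finset.sum_mul]
  simp_rw [Finset.sum_congr rfl hS, Finset.mul_sum]
  refine Finset.sum_comm' fun k m => ?_
  simp only [mem_filter, mem_Icc, Nat.mem_divisors]
  constructor
  · rintro ⟨⟨hrk, -⟩, ⟨h1m, hmN⟩, hkm⟩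
    exact ⟨⟨⟨hkm, by omega⟩, hrk⟩, h1m, hmN⟩
  · rintro ⟨⟨⟨hkm, -⟩, hrk⟩, h1m, hmN⟩
    exact ⟨⟨hrk, (Nat.le_of_dvd h1m hkm).trans hmN⟩, ⟨h1m, hmN⟩, hkm⟩

theorem sum_divisors_moebius (m : ℕ) : ∑ d ∈ m.divisors, μ d = if m = 1 then 1 else 0 := by
  simpa only [coe_mul_zeta_apply, one_apply] using congrArg (· m) moebius_mul_coe_zeta

/-- Minus the contribution of the divisors `1, 2, 3` to `∑ k ∣ m, μ k = 0`. -/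
def moebiusTail (m : ℕ) : ℤ :=
  if m < 4 then 0 else (if 2 ∣ m then 1 else 0) + (if 3 ∣ m then 1 else 0) - 1

theorem sum_divisors_four_le_moebius (m : ℕ) :
    ∑ k ∈ m.divisors with 4 ≤ k, μ k = moebiusTail m := by
  rcases lt_or_ge m 4 with hm | hm
  · rw [moebiusTail, if_pos hm]
    exact Finset.sum_eq_zero fun k hk => by
      simp only [mem_filter, Nat.mem_divisors] at hk
      exact absurd (Nat.le_of_dvd (by omega) hk.1.1) (by omega)
  have hlow :
      ∑ k ∈ m.divisors with ¬ 4 ≤ k, μ k = ∑ k ∈ range 4, if k ∣ m then μ k else 0 := by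
    rw [← Finset.sum_filter]
    refine Finset.sum_congr ?_ fun _ _ => rfl
    ext k
    simp only [mem_filter, Nat.mem_divisors, mem_range]
    constructor
    · rintro ⟨⟨hkm, -⟩, hk⟩
      exact ⟨by omega, hkm⟩
    · rintro ⟨hk, hkm⟩
      exact ⟨⟨hkm, by omega⟩, by omega⟩
  have htotal := Finset.sum_filter_add_sum_filter_not m.divisors (4 ≤ ·) (μ ·)
  rw [sum_divisors_moebius, if_neg (by omega), hlow] at htotal
  simp only [Finset.sum_range_succ, Finset.sum_range_zero, moebius_apply_one,
    moebius_apply_prime Nat.prime_two, moebius_apply_prime Nat.prime_three] at htotal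
  rw [moebiusTail, if_neg (by omega)]
  split_ifs at htotal ⊢ <;> simp_all <;> omega

open PowerSeries

noncomputable def pAtLeastSeries (r : ℕ) : PowerSeries ℤ :=
  PowerSeries.mk fun n => (pAtLeast r n : ℤ)

noncomputable def pSeries : PowerSeries ℤ := PowerSeries.mk fun n => (p n : ℤ)

theorem pAtLeastSeries_succ {r : ℕ} (hr : 0 < r) :
    pAtLeastSeries (r + 1) = (1 - X ^ r) * pAtLeastSeries r := by
  ext n
  rw [sub_mul, one_mul, map_sub, coeff_X_pow_mul']
  simp only [pAtLeastSeries, coeff_mk, pAtLeast_eq_succ_add hr n]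
  split_ifs <;> push_cast <;> ring

theorem pAtLeastSeries_four :
    pAtLeastSeries 4 = (1 - X) * (1 - X ^ 2) * (1 - X ^ 3) * pSeries := by
  have h1 : pAtLeastSeries 1 = pSeries := by simp [pAtLeastSeries, pSeries, pAtLeast_one]
  have h2 : pAtLeastSeries 2 = (1 - X ^ 1) * pAtLeastSeries 1 := pAtLeastSeries_succ one_pos
  have h3 : pAtLeastSeries 3 = (1 - X ^ 2) * pAtLeastSeries 2 := pAtLeastSeries_succ two_pos
  have h4 : pAtLeastSeries 4 = (1 - X ^ 3) * pAtLeastSeries 3 := pAtLeastSeries_succ three_pos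
  rw [h4, h3, h2, h1]
  ring

theorem mk_moebiusTail_mul_one_sub_X_pow_six :
    PowerSeries.mk moebiusTail * (1 - X ^ 6) = -(X ^ 5 * (1 - X + X ^ 2)) := by
  ext n
  rw [show -(X ^ 5 * (1 - X + X ^ 2) : PowerSeries ℤ) = X ^ 6 - X ^ 5 - X ^ 7 by ring,
    mul_sub, mul_one, mul_comm, map_sub, map_sub, map_sub, coeff_X_pow_mul', coeff_mk,
    coeff_mk, coeff_X_pow, coeff_X_pow, coeff_X_pow]
  rcases lt_or_ge n 10 with hn | hn
  · interval_cases n <;> decide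
  · have h2 : 2 ∣ n ↔ 2 ∣ n - 6 := by omega
    have h3 : 3 ∣ n ↔ 3 ∣ n - 6 := by omega
    simp only [moebiusTail, h2, h3, if_neg (show ¬ n < 4 by omega),
      if_neg (show ¬ n - 6 < 4 by omega), if_pos (show 6 ≤ n by omega),
      if_neg (show n ≠ 5 by omega), if_neg (show n ≠ 6 by omega), if_neg (show n ≠ 7 by omega)]
    ring

theorem mk_moebiusTail_mul_pAtLeastSeries_four :
    PowerSeries.mk moebiusTail * pAtLeastSeries 4 = -(X ^ 5 * (1 - X) ^ 2 * pSeries) := by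
  have hne : (1 - X ^ 6 : PowerSeries ℤ) ≠ 0 := fun h => by
    simpa using congrArg constantCoeff h
  refine mul_right_cancel₀ hne ?_
  -- `1 - X ^ 6 = (1 - X ^ 3) (1 + X) (1 - X + X ^ 2)`
  calc PowerSeries.mk moebiusTail * pAtLeastSeries 4 * (1 - X ^ 6)
      = PowerSeries.mk moebiusTail * (1 - X ^ 6) * ((1 - X) * (1 - X ^ 2) * (1 - X ^ 3)) *
          pSeries := by rw [pAtLeastSeries_four]; ring
    _ = _ := by rw [mk_moebiusTail_mul_one_sub_X_pow_six]; ring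

theorem coeff_mk_moebiusTail_mul_pAtLeastSeries (r N : ℕ) :
    coeff N (PowerSeries.mk moebiusTail * pAtLeastSeries r) =
      ∑ m ∈ Icc 1 N, (pAtLeast r (N - m) : ℤ) * moebiusTail m := by
  rw [coeff_mul, Finset.Nat.sum_antidiagonal_eq_sum_range_succ_mk]
  symm
  calc ∑ m ∈ Icc 1 N, (pAtLeast r (N - m) : ℤ) * moebiusTail m
      = ∑ m ∈ range (N + 1), (pAtLeast r (N - m) : ℤ) * moebiusTail m := by
        refine Finset.sum_subset (fun m hm => by simp at hm ⊢; omega) fun m hm hm' => ?_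
        obtain rfl : m = 0 := by simp at hm hm'; omega
        simp [moebiusTail]
    _ = _ := Finset.sum_congr rfl fun m _ => by simp [pAtLeastSeries, mul_comm]

theorem neg_sum_S_four_mul_moebius {n : ℕ} (hn : 2 ≤ n) :
    -∑ k ∈ Icc 4 (n + 5), (S 4 (n + 5) k : ℤ) * μ k =
      (p n : ℤ) - 2 * (p (n - 1) : ℤ) + (p (n - 2) : ℤ) := by
  simp_rw [sum_S_mul_moebius four_pos, sum_divisors_four_le_moebius,
    ← coeff_mk_moebiusTail_mul_pAtLeastSeries, mk_moebiusTail_mul_pAtLeastSeries_four, map_neg,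
    neg_neg]
  obtain ⟨m, rfl⟩ := Nat.exists_eq_add_of_le' hn
  rw [show X ^ 5 * (1 - X) ^ 2 * pSeries =
      X ^ 5 * pSeries - X ^ 6 * pSeries - X ^ 6 * pSeries + X ^ 7 * pSeries by ring]
  simp [coeff_X_pow_mul', pSeries]
  ring

theorem card_no_ones_max_repeated_eq_neg_sum_S4_moebius (n : ℕ) (hn : 3 ≤ n) :
    (Nat.card {P : Nat.Partition n //
        1 ∉ P.parts ∧
        ∃ m ∈ P.parts, (∀ i ∈ P.parts, i ≤ m) ∧ 2 ≤ P.parts.count m} : ℤ) =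
      -∑ k ∈ Finset.Icc 4 (n + 5),
          (S 4 (n + 5) k : ℤ) * ArithmeticFunction.moebius k ∧
    (p n : ℤ) - 2 * (p (n - 1) : ℤ) + (p (n - 2) : ℤ) =
      -∑ k ∈ Finset.Icc 4 (n + 5),
          (S 4 (n + 5) k : ℤ) * ArithmeticFunction.moebius k := by
  have hsum := neg_sum_S_four_mul_moebius (by omega : 2 ≤ n)
  exact ⟨(card_no_one_max_repeated hn).trans hsum.symm, hsum.symm⟩
end

section
/- Let α be a prime number. For every integer n ≥ 0, ∑_{k=1}^{n+1} S^{(1)}_{n+1,k} · μ(α·k) = -∑_{j ≥ 0, α^j ≤ n+1} p(n+1-α^j). -/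
open Finset

/-! Counting the partitions of `N` with at least `m` parts equal to `k` gives
`S 1 N k = ∑_{m k ≤ N} p (N - m k)`. Grouping by `d = m k`, the coefficient of `p (N - d)` is
`∑_{k ∣ d} μ (α k) = -∑_{k ∣ d, α ∤ k} μ k`; the divisors of `d` prime to `α` are those of the
`α`-free part of `d`, so the coefficient is `-1` if `d` is a power of `α` and `0` otherwise. -/

open ArithmeticFunction
open scoped ArithmeticFunction.Moebius

namespace Nat.Partition

theorem mul_add_sum_sub_replicate {n : ℕ} (P : n.Partition) {k m : ℕ}
    (hm : m ≤ P.parts.count k) : m * k + (P.parts - Multiset.replicate m k).sum = n := by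
  have h := congrArg Multiset.sum
    (add_tsub_cancel_of_le (Multiset.le_count_iff_replicate_le.mp hm))
  rwa [Multiset.sum_add, Multiset.sum_replicate, smul_eq_mul, P.parts_sum] at h

theorem count_mul_le {n : ℕ} (P : n.Partition) (k : ℕ) : P.parts.count k * k ≤ n := by
  have := P.mul_add_sum_sub_replicate (le_refl (P.parts.count k))
  omega

def countGeEquiv {n k m : ℕ} (hk : 0 < k) (h : m * k ≤ n) :
    {P : n.Partition // m ≤ P.parts.count k} ≃ (n - m * k).Partition where
  toFun P := ⟨P.1.parts - Multiset.replicate m k,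
    fun hi ↦ P.1.parts_pos (Multiset.mem_of_le tsub_le_self hi),
    by have := P.1.mul_add_sum_sub_replicate P.2; omega⟩
  invFun Q := ⟨⟨Q.parts + Multiset.replicate m k,
    fun hi ↦ (Multiset.mem_add.mp hi).elim Q.parts_pos fun h ↦ Multiset.eq_of_mem_replicate h ▸ hk,
    by rw [Multiset.sum_add, Q.parts_sum, Multiset.sum_replicate, smul_eq_mul]; omega⟩,
    by simp⟩
  left_inv P := Subtype.ext <| Nat.Partition.ext <|
    tsub_add_cancel_of_le (Multiset.le_count_iff_replicate_le.mp P.2)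
  right_inv Q := Nat.Partition.ext <| add_tsub_cancel_right _ _

theorem card_filter_le_count {n k m : ℕ} (hk : 0 < k) (h : m * k ≤ n) :
    #{P : n.Partition | m ≤ P.parts.count k} = p (n - m * k) := by
  rw [← Fintype.card_subtype, p]
  exact Fintype.card_congr (countGeEquiv hk h)

theorem sum_count_eq_sum_p (n : ℕ) {k : ℕ} (hk : 0 < k) :
    ∑ P : n.Partition, P.parts.count k = ∑ m ∈ Icc 1 (n / k), p (n - m * k) := by
  have hcount (P : n.Partition) :
      P.parts.count k = #((Icc 1 (n / k)).bipartiteAbove (fun P m ↦ m ≤ P.parts.count k) P) := by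
    have := (Nat.le_div_iff_mul_le hk).mpr (P.count_mul_le k)
    rw [bipartiteAbove, show {m ∈ Icc 1 (n / k) | m ≤ P.parts.count k} = Icc 1 (P.parts.count k) by
      ext; simp only [mem_filter, mem_Icc]; omega]
    simp
  rw [sum_congr rfl fun P _ ↦ hcount P, sum_card_bipartiteAbove_eq_sum_card_bipartiteBelow]
  exact sum_congr rfl fun m hm ↦
    card_filter_le_count hk ((Nat.le_div_iff_mul_le hk).mp (mem_Icc.mp hm).2)

end Nat.Partition

theorem S_one_eq_sum_count (n k : ℕ) : S 1 n k = ∑ P : n.Partition, P.parts.count k :=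
  sum_congr rfl fun P _ ↦ if_pos fun _ ↦ P.parts_pos

theorem Finset.sum_Icc_sum_Icc_div_eq_sum_divisors {M : Type*} [AddCommMonoid M] (N : ℕ)
    (f : ℕ → ℕ → M) :
    ∑ k ∈ Icc 1 N, ∑ m ∈ Icc 1 (N / k), f k (m * k) = ∑ d ∈ Icc 1 N, ∑ k ∈ d.divisors, f k d := by
  have hmultiples (k : ℕ) (hk : k ∈ Icc 1 N) :
      ∑ m ∈ Icc 1 (N / k), f k (m * k) = ∑ d ∈ Icc 1 N with k ∣ d, f k d := by
    have hk : 0 < k := (mem_Icc.mp hk).1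
    refine sum_nbij' (· * k) (· / k) ?_ ?_ ?_ ?_ fun _ _ ↦ rfl
    · intro m hm
      rw [mem_Icc, Nat.le_div_iff_mul_le hk] at hm
      simp only [mem_filter, mem_Icc, dvd_mul_left, and_true]
      exact ⟨Nat.mul_pos hm.1 hk, hm.2⟩
    · intro d hd
      obtain ⟨⟨hd1, hdN⟩, m, rfl⟩ := mem_filter.mp hd |>.imp_left mem_Icc.mp
      rw [mem_Icc, Nat.mul_div_cancel_left m hk, Nat.le_div_iff_mul_le hk, mul_comm m k]
      exact ⟨Nat.pos_of_ne_zero (by rintro rfl; simp at hd1), hdN⟩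
    · intro m _
      exact Nat.mul_div_cancel m hk
    · intro d hd
      exact Nat.div_mul_cancel (mem_filter.mp hd).2
  rw [sum_congr rfl hmultiples]
  refine sum_comm' fun k d ↦ ?_
  simp only [mem_Icc, mem_filter, Nat.mem_divisors]
  constructor
  · rintro ⟨-, hd, hkd⟩
    exact ⟨⟨hkd, by omega⟩, hd⟩
  · rintro ⟨⟨hkd, -⟩, hd⟩
    exact ⟨⟨Nat.pos_of_dvd_of_pos hkd hd.1, (Nat.le_of_dvd hd.1 hkd).trans hd.2⟩, hd, hkd⟩

namespace ArithmeticFunction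

theorem moebius_prime_mul {q : ℕ} (hq : q.Prime) (k : ℕ) :
    μ (q * k) = if q ∣ k then 0 else -μ k := by
  split_ifs with h
  · exact moebius_eq_zero_of_not_squarefree fun hsq ↦
      hq.ne_one (Nat.isUnit_iff.mp (hsq q (mul_dvd_mul_left q h)))
  · rw [isMultiplicative_moebius.map_mul_of_coprime (hq.coprime_iff_not_dvd.mpr h),
      moebius_apply_prime hq, neg_one_mul]

theorem sum_divisors_moebius_prime_mul {q d : ℕ} (hq : q.Prime) (hd : d ≠ 0) :
    ∑ k ∈ d.divisors, μ (q * k) = if ordCompl[q] d = 1 then -1 else 0 := by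
  have hcoprime_divisors : {k ∈ d.divisors | ¬q ∣ k} = (ordCompl[q] d).divisors := by
    ext k
    simp only [mem_filter, Nat.mem_divisors, (Nat.ordCompl_pos q hd).ne', hd, ne_eq,
      not_false_iff, and_true]
    exact ⟨fun h ↦ Nat.dvd_ordCompl_of_dvd_not_dvd h.1 h.2,
      fun h ↦ ⟨h.trans (Nat.ordCompl_dvd d q), fun hqk ↦ Nat.not_dvd_ordCompl hq hd (hqk.trans h)⟩⟩
  rw [sum_congr rfl fun k _ ↦ moebius_prime_mul hq k, sum_ite, sum_const_zero, zero_add,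
    hcoprime_divisors, sum_neg_distrib, ← coe_mul_zeta_apply, moebius_mul_coe_zeta, one_apply]
  split_ifs <;> rfl

end ArithmeticFunction

theorem Nat.ordCompl_eq_one_iff {q d : ℕ} (hq : q.Prime) (hd : d ≠ 0) :
    ordCompl[q] d = 1 ↔ ∃ j, q ^ j = d := by
  refine ⟨fun h ↦ ⟨d.factorization q, ?_⟩, ?_⟩
  · simpa [h] using Nat.ordProj_mul_ordCompl_eq_self d q
  · rintro ⟨j, rfl⟩
    exact Nat.ordCompl_self_pow hq

theorem Nat.filter_Icc_ordCompl_eq_one {q : ℕ} (hq : q.Prime) (N : ℕ) :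
    {d ∈ Icc 1 N | ordCompl[q] d = 1} = {j ∈ range (N + 1) | q ^ j ≤ N}.image (q ^ ·) := by
  ext d
  simp only [mem_filter, mem_Icc, mem_image, mem_range]
  constructor
  · rintro ⟨⟨hd, hdN⟩, h⟩
    obtain ⟨j, rfl⟩ := (Nat.ordCompl_eq_one_iff hq (by omega)).mp h
    exact ⟨j, ⟨(Nat.lt_pow_self hq.one_lt).trans_le hdN |>.trans (by omega), hdN⟩, rfl⟩
  · rintro ⟨j, ⟨-, hj⟩, rfl⟩
    exact ⟨⟨Nat.one_le_iff_ne_zero.mpr (pow_ne_zero j hq.ne_zero), hj⟩, Nat.ordCompl_self_pow hq⟩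

theorem sum_S1_moebius_prime_mul (α : ℕ) (hα : α.Prime) (n : ℕ) :
    ∑ k ∈ Finset.Icc 1 (n + 1),
        (S 1 (n + 1) k : ℤ) * ArithmeticFunction.moebius (α * k) =
      -∑ j ∈ (Finset.range (n + 2)).filter (fun j => α ^ j ≤ n + 1),
          (p (n + 1 - α ^ j) : ℤ) := by
  set N := n + 1
  calc ∑ k ∈ Icc 1 N, (S 1 N k : ℤ) * μ (α * k)
      = ∑ k ∈ Icc 1 N, ∑ m ∈ Icc 1 (N / k), (p (N - m * k) : ℤ) * μ (α * k) := by
        refine sum_congr rfl fun k hk ↦ ?_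
        rw [S_one_eq_sum_count, Nat.Partition.sum_count_eq_sum_p N (mem_Icc.mp hk).1,
          Nat.cast_sum, sum_mul]
    _ = ∑ d ∈ Icc 1 N, (p (N - d) : ℤ) * ∑ k ∈ d.divisors, μ (α * k) := by
        rw [sum_Icc_sum_Icc_div_eq_sum_divisors N fun k d ↦ (p (N - d) : ℤ) * μ (α * k)]
        simp_rw [mul_sum]
    _ = ∑ d ∈ Icc 1 N, if ordCompl[α] d = 1 then -(p (N - d) : ℤ) else 0 := by
        refine sum_congr rfl fun d hd ↦ ?_
        rw [sum_divisors_moebius_prime_mul hα (Nat.one_le_iff_ne_zero.mp (mem_Icc.mp hd).1)]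
        split_ifs <;> simp
    _ = _ := by
        rw [← sum_filter, Nat.filter_Icc_ordCompl_eq_one hα,
          sum_image fun _ _ _ _ h ↦ Nat.pow_right_injective hα.two_le h, sum_neg_distrib]
end
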